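/- arXiv:1311.0278 — 5 statements merged into one kernel-verified Lean document; each statement's English description precedes it below -/
import Mathlib

section
/- Let R be a noetherian H-UFD and let E(R) be the multiplicative set generated by the prime H-eigenvectors of R together with the units. Then every nonzero H-stable ideal of R meets E(R); consequently, the localization R[E(R)^{-1}] is H-simple (its only H-stable ideals are 0 and itself). -/
/-- A normal element `p` of a ring: `Rp = pR`. -/
def IsNormalElem {R : Type*} [Ring R] (p : R) : Prop :=
  (∀ r : R, ∃ r' : R, r * p = p * r') ∧ (∀ r : R, ∃ r' : R, p * r = r' * p)

/-- A prime element of a domain: a nonzero normal element generating a completely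
prime ideal `Rp`. -/
def IsPrimeElem {R : Type*} [Ring R] (p : R) : Prop :=
  p ≠ 0 ∧ IsNormalElem p ∧
    ∀ a b : R, (∃ r : R, a * b = r * p) → (∃ r : R, a = r * p) ∨ (∃ r : R, b = r * p)

/-- An `H`-eigenvector of a `K`-algebra `R` with `H` acting by automorphisms. -/
def IsHEigenvector (K : Type*) {R : Type*} (H : Type*) [CommSemiring K] [Ring R]
    [Algebra K R] [Monoid H] [MulSemiringAction H R] (x : R) : Prop :=
  x ≠ 0 ∧ ∀ h : H, ∃ c : K, h • x = c • x

/-- An `H`-stable two-sided ideal. -/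
def TwoSidedIdeal.HStable {R : Type*} (H : Type*) [Ring R] [Monoid H]
    [MulSemiringAction H R] (I : TwoSidedIdeal R) : Prop :=
  ∀ (h : H) (r : R), r ∈ I → h • r ∈ I

/-- An `H`-prime ideal: a proper `H`-stable ideal `P` with `IJ ⊆ P → I ⊆ P ∨ J ⊆ P`
for all `H`-stable ideals `I`, `J`. -/
def TwoSidedIdeal.IsHPrime {R : Type*} (H : Type*) [Ring R] [Monoid H]
    [MulSemiringAction H R] (P : TwoSidedIdeal R) : Prop :=
  P.HStable H ∧ P ≠ ⊤ ∧
    ∀ I J : TwoSidedIdeal R, I.HStable H → J.HStable H →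
      (∀ a ∈ I, ∀ b ∈ J, a * b ∈ P) → I ≤ P ∨ J ≤ P

/-- `R` is an `H`-UFD: every nonzero `H`-prime ideal contains a prime `H`-eigenvector. -/
def IsHUFD (K : Type*) (R H : Type*) [CommSemiring K] [Ring R] [Algebra K R]
    [Monoid H] [MulSemiringAction H R] : Prop :=
  ∀ P : TwoSidedIdeal R, P.IsHPrime H → P ≠ ⊥ →
    ∃ p ∈ P, IsPrimeElem p ∧ IsHEigenvector K H p

/-!
If a nonzero `H`-stable ideal `I` missed `E(R)`, noetherianity would give an `H`-stable ideal
`M ⊇ I` maximal among those missing `E(R)`. The usual argument for ideals maximal with respect to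
missing a multiplicative set makes `M` an `H`-prime, so the `H`-UFD property puts a prime
`H`-eigenvector, an element of `E(R)`, inside `M`: a contradiction. A nonzero ideal `J` of
`R[E(R)⁻¹]` with `H`-stable contraction contracts to a nonzero ideal of `R`, which thus contains
an element of `E(R)`; that element is a unit of the localization, so `J` is everything.
-/

theorem exists_le_maximal_of_wellFoundedGT {α : Type*} [PartialOrder α] [WellFoundedGT α]
    {P : α → Prop} {a : α} (ha : P a) : ∃ b, a ≤ b ∧ Maximal P b := by
  obtain ⟨b, ⟨hab, hb⟩, hmax⟩ := wellFounded_gt.has_min {b | a ≤ b ∧ P b} ⟨a, le_rfl, ha⟩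
  exact ⟨b, hab, maximal_iff_forall_gt.2 ⟨hb, fun c hbc hc => hmax c ⟨hab.trans hbc.le, hc⟩ hbc⟩⟩

namespace TwoSidedIdeal

variable {R : Type*} [Ring R]

instance wellFoundedGT_of_isNoetherianRing [IsNoetherianRing R] :
    WellFoundedGT (TwoSidedIdeal R) :=
  (OrderEmbedding.ofMapLEIff asIdeal fun _ _ =>
    ⟨fun h _ hx => mem_asIdeal.1 (SetLike.le_def.1 h (mem_asIdeal.2 hx)),
      fun h => asIdeal.monotone h⟩).wellFoundedGT

theorem mul_mem_of_mem_sup {M A B : TwoSidedIdeal R} (hAB : ∀ a ∈ A, ∀ b ∈ B, a * b ∈ M)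
    {x y : R} (hx : x ∈ M ⊔ A) (hy : y ∈ M ⊔ B) : x * y ∈ M := by
  obtain ⟨m, hm, a, ha, rfl⟩ := mem_sup.1 hx
  obtain ⟨m', hm', b, hb, rfl⟩ := mem_sup.1 hy
  rw [add_mul, mul_add a]
  exact M.add_mem (M.mul_mem_right _ _ hm) (M.add_mem (M.mul_mem_left _ _ hm') (hAB a ha b hb))

variable {H : Type*} [Monoid H] [MulSemiringAction H R]

theorem HStable.sup {I J : TwoSidedIdeal R} (hI : I.HStable H) (hJ : J.HStable H) :
    (I ⊔ J).HStable H := by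
  intro h x hx
  obtain ⟨y, hy, z, hz, rfl⟩ := mem_sup.1 hx
  rw [smul_add]
  exact mem_sup.2 ⟨h • y, hI h y hy, h • z, hJ h z hz, rfl⟩

theorem isHPrime_of_maximal_disjoint {S : Submonoid R} {M : TwoSidedIdeal R}
    (hM : Maximal (fun J : TwoSidedIdeal R => J.HStable H ∧ ∀ s ∈ S, s ∉ J) M) :
    M.IsHPrime H := by
  obtain ⟨hMstab, hMS⟩ := hM.prop
  have meets : ∀ C : TwoSidedIdeal R, C.HStable H → ¬ C ≤ M → ∃ s ∈ S, s ∈ M ⊔ C := by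
    intro C hC hCM
    by_contra! hS
    exact hM.not_gt ⟨hMstab.sup hC, hS⟩ (left_lt_sup.2 hCM)
  refine ⟨hMstab, fun htop => hMS 1 S.one_mem (htop ▸ mem_top _), ?_⟩
  intro A B hA hB hAB
  by_contra! hAM
  obtain ⟨s, hsS, hs⟩ := meets A hA hAM.1
  obtain ⟨t, htS, ht⟩ := meets B hB hAM.2
  exact hMS _ (S.mul_mem hsS htS) (mul_mem_of_mem_sup hAB hs ht)

theorem exists_mem_submonoid_of_isHUFD {K : Type*} [CommSemiring K] [Algebra K R]
    [WellFoundedGT (TwoSidedIdeal R)] (hufd : IsHUFD K R H) {S : Submonoid R}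
    (hS : {p : R | IsPrimeElem p ∧ IsHEigenvector K H p} ⊆ S) {I : TwoSidedIdeal R}
    (hI : I.HStable H) (hI0 : I ≠ ⊥) : ∃ s ∈ S, s ∈ I := by
  by_contra! hIS
  obtain ⟨M, hIM, hM⟩ := exists_le_maximal_of_wellFoundedGT
    (P := fun J : TwoSidedIdeal R => J.HStable H ∧ ∀ s ∈ S, s ∉ J) ⟨hI, hIS⟩
  have hM0 : M ≠ ⊥ := fun h => hI0 (le_bot_iff.1 (h ▸ hIM))
  obtain ⟨p, hpM, hp⟩ := hufd M (isHPrime_of_maximal_disjoint hM) hM0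
  exact hM.prop.2 p (hS hp) hpM

end TwoSidedIdeal

namespace OreLocalization

variable {R : Type*} [Ring R] {S : Submonoid R} [OreSet S]

theorem eq_top_of_numeratorRingHom_mem {J : TwoSidedIdeal R[S⁻¹]} {s : R} (hs : s ∈ S)
    (hJ : numeratorRingHom s ∈ J) : J = ⊤ := by
  obtain ⟨u, hu⟩ := numerator_isUnit (⟨s, hs⟩ : S)
  have : ((u⁻¹ : R[S⁻¹]ˣ) : R[S⁻¹]) * u ∈ J := J.mul_mem_left _ _ (hu ▸ hJ)
  rwa [Units.inv_mul, TwoSidedIdeal.one_mem_iff] at this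

theorem comap_numeratorRingHom_ne_bot {J : TwoSidedIdeal R[S⁻¹]} (hJ : J ≠ ⊥) :
    J.comap numeratorRingHom ≠ ⊥ := by
  obtain ⟨x, hxJ, hx0⟩ : ∃ x ∈ J, x ≠ 0 := by
    by_contra! h
    exact hJ (le_bot_iff.1 fun x hx => (TwoSidedIdeal.mem_bot _).2 (h x hx))
  induction x using OreLocalization.ind with
  | _ r s =>
    have hr : numeratorRingHom r ∈ J := by
      rw [numeratorRingHom_apply, ← OreLocalization.mul_cancel (s := s)]
      exact J.mul_mem_left _ _ hxJ
    intro hbot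
    have : r ∈ J.comap numeratorRingHom := (TwoSidedIdeal.mem_comap _).2 hr
    rw [hbot, TwoSidedIdeal.mem_bot] at this
    exact hx0 (this ▸ zero_oreDiv' s)

end OreLocalization

theorem hstable_ideal_meets_E_and_localization_H_simple_general
    (K R H : Type*) [Field K] [Ring R] [Algebra K R] [IsNoetherianRing R]
    [Group H] [MulSemiringAction H R] (hufd : IsHUFD K R H)
    (E : Submonoid R)
    (hE : E = Submonoid.closure
      ({p : R | IsPrimeElem p ∧ IsHEigenvector K H p} ∪ {u : R | IsUnit u}))
    [OreLocalization.OreSet E] :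
    (∀ I : TwoSidedIdeal R, I.HStable H → I ≠ ⊥ → ∃ e ∈ E, e ∈ I) ∧
    (∀ J : TwoSidedIdeal (OreLocalization E R),
      (∀ (h : H) (r : R), OreLocalization.numeratorRingHom r ∈ J →
        OreLocalization.numeratorRingHom (h • r) ∈ J) →
      J = ⊥ ∨ J = ⊤) := by
  have hEprime : {p : R | IsPrimeElem p ∧ IsHEigenvector K H p} ⊆ E :=
    hE ▸ Set.subset_union_left.trans Submonoid.subset_closure
  have meets : ∀ I : TwoSidedIdeal R, I.HStable H → I ≠ ⊥ → ∃ e ∈ E, e ∈ I :=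
    fun I hI hI0 => TwoSidedIdeal.exists_mem_submonoid_of_isHUFD hufd hEprime hI hI0
  refine ⟨meets, fun J hJ => or_iff_not_imp_left.2 fun hJ0 => ?_⟩
  have hstable : (J.comap OreLocalization.numeratorRingHom).HStable H := fun h r hr =>
    (TwoSidedIdeal.mem_comap _).2 (hJ h r ((TwoSidedIdeal.mem_comap _).1 hr))
  obtain ⟨e, heE, heJ⟩ :=
    meets _ hstable (OreLocalization.comap_numeratorRingHom_ne_bot hJ0)
  exact OreLocalization.eq_top_of_numeratorRingHom_mem heE ((TwoSidedIdeal.mem_comap _).1 heJ)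

/-- In a noetherian `H`-UFD, every nonzero `H`-stable ideal meets the
multiplicative set `E(R)` generated by the prime `H`-eigenvectors and the units;
consequently the Ore localization `R[E(R)⁻¹]` is `H`-simple (every two-sided ideal of
the localization whose contraction to `R` is `H`-stable is `0` or everything). -/
theorem hstable_ideal_meets_E_and_localization_H_simple
    (K R H : Type*) [Field K] [Ring R] [IsDomain R] [Algebra K R] [IsNoetherianRing R]
    [Group H] [MulSemiringAction H R] (hufd : IsHUFD K R H)
    (E : Submonoid R)
    (hE : E = Submonoid.closure
      ({p : R | IsPrimeElem p ∧ IsHEigenvector K H p} ∪ {u : R | IsUnit u}))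
    [OreLocalization.OreSet E] :
    (∀ I : TwoSidedIdeal R, I.HStable H → I ≠ ⊥ → ∃ e ∈ E, e ∈ I) ∧
    (∀ J : TwoSidedIdeal (OreLocalization E R),
      (∀ (h : H) (r : R), OreLocalization.numeratorRingHom r ∈ J →
        OreLocalization.numeratorRingHom (h • r) ∈ J) →
      J = ⊥ ∨ J = ⊤) :=
  hstable_ideal_meets_E_and_localization_H_simple_general K R H hufd E hE
end

section
/- Let R be a symmetric CGL extension of length N with y-elements y_1, …, y_N as in the standard theory, and let u be the product of the homogeneous prime elements of R (i.e., u = ∏ y_l over all l with s(l) = +∞, in some order). Then for every k ∈ [1,N], x_k u = (∏_{j=1}^N λ_{kj}) u x_k. Consequently, conjugation a ↦ u^{-1} a u on Fract(R) restricts to the Nakayama automorphism ν of R, i.e., a u = u ν(a) for all a ∈ R. -/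
/-- The ordered monomial `x 0 ^ m 0 * x 1 ^ m 1 * ⋯ * x (N-1) ^ m (N-1)`. -/
def orderedMonomial {R : Type*} [Ring R] {N : ℕ} (x : Fin N → R) (m : Fin N → ℕ) : R :=
  ((List.finRange N).map fun i => x i ^ m i).prod

/-- The reverse-ordered monomial `x (N-1) ^ m (N-1) * ⋯ * x 0 ^ m 0`. -/
def revMonomial {R : Type*} [Ring R] {N : ℕ} (x : Fin N → R) (m : Fin N → ℕ) : R :=
  (((List.finRange N).reverse).map fun i => x i ^ m i).prod

/-- `R` has the PBW property for the generators `x` : the ordered monomials form a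
`K`-basis. -/
def IsPBW (K : Type*) {R : Type*} [Field K] [Ring R] [Algebra K R] {N : ℕ}
    (x : Fin N → R) : Prop :=
  LinearIndependent K (orderedMonomial x) ∧
    Submodule.span K (Set.range (orderedMonomial x)) = ⊤

/-- The unital subalgebra `R_{[a,b]}` generated by the `x i` with `a ≤ i ≤ b`
(`0`-based indices, bounds taken in `ℤ`). -/
def genSub (K : Type*) {R : Type*} [Field K] [Ring R] [Algebra K R] {N : ℕ}
    (x : Fin N → R) (a b : ℤ) : Subalgebra K R :=
  Algebra.adjoin K {r | ∃ i : Fin N, a ≤ (i : ℤ) ∧ (i : ℤ) ≤ b ∧ r = x i}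

/-- A diagonalized iterated Ore extension: PBW basis plus relations
`x k * x j = λ_{kj} x j x k + δ_k(x_j)` with `δ_k(x_j) ∈ R_{[1,k-1]}`. -/
def IsDiagonalizedIOE (K : Type*) {R : Type*} [Field K] [Ring R] [Algebra K R] {N : ℕ}
    (x : Fin N → R) (lam : Fin N → Fin N → Kˣ) : Prop :=
  IsPBW K x ∧
    ∀ j k : Fin N, j < k →
      x k * x j - (lam k j : K) • (x j * x k) ∈ genSub K x 0 ((k : ℤ) - 1)

/-- Multiplicative skew-symmetry of the `λ`-matrix. -/
def MulSkewSymm {K : Type*} [Field K] {N : ℕ} (lam : Fin N → Fin N → Kˣ) : Prop :=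
  (∀ i, lam i i = 1) ∧ ∀ i j, lam j i = (lam i j)⁻¹

/-- Reversibility: a presentation with the variables in descending order, i.e. the
reversed monomials form a basis and `δ*_j(x_k) = x j x k - λ_{jk} x k x j` lies in the
subalgebra generated by `x (j+1), …, x (N-1)`. -/
def IsReversible (K : Type*) {R : Type*} [Field K] [Ring R] [Algebra K R] {N : ℕ}
    (x : Fin N → R) (lam : Fin N → Fin N → Kˣ) : Prop :=
  (LinearIndependent K (revMonomial x) ∧
      Submodule.span K (Set.range (revMonomial x)) = ⊤) ∧
    ∀ j k : Fin N, j < k →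
      x j * x k - (lam j k : K) • (x k * x j) ∈ genSub K x ((j : ℤ) + 1) (N - 1)

/-!
Each prime `y l` skew-commutes with `x k` by the scalar `∏_{i ∈ T l} λ_{ki}`, so their product
`u` skew-commutes with `x k` by the product of these scalars, which is `∏_j λ_{kj}` because the
sets `T l` partition the index set. This is the scalar by which `ν` acts on `x k`, so
`a u = u ν(a)` holds for the generators; it is preserved by sums and products, hence holds on
all of `R`.
-/

theorem List.mul_prod_map_eq_smul_prod_map_mul {M R ι : Type*} [CommMonoid M] [Monoid R]
    [MulAction M R] [IsScalarTower M R R] [SMulCommClass M R R]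
    (a : R) (y : ι → R) (c : ι → M) (L : List ι)
    (h : ∀ i ∈ L, a * y i = c i • (y i * a)) :
    a * (L.map y).prod = (L.map c).prod • ((L.map y).prod * a) := by
  induction L with
  | nil => simp
  | cons i L ih =>
    simp only [List.map_cons, List.prod_cons]
    rw [← mul_assoc, h i List.mem_cons_self, smul_mul_assoc, mul_assoc,
      ih fun j hj => h j (List.mem_cons_of_mem i hj), mul_smul_comm, smul_smul, mul_assoc]

theorem Finset.prod_prod_eq_prod_univ_of_existsUnique {ι α M : Type*} [Fintype α]
    [CommMonoid M] (S : Finset ι) (T : ι → Finset α) (hpart : ∀ j, ∃! i, i ∈ S ∧ j ∈ T i)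
    (f : α → M) : ∏ i ∈ S, ∏ j ∈ T i, f j = ∏ j, f j := by
  classical
  have hdisj : (S : Set ι).PairwiseDisjoint T := by
    intro a ha b hb hab
    refine Finset.disjoint_left.mpr fun j hja hjb => hab ?_
    obtain ⟨i, -, hi⟩ := hpart j
    rw [hi a ⟨ha, hja⟩, hi b ⟨hb, hjb⟩]
  have hcover : S.biUnion T = Finset.univ := by
    refine Finset.eq_univ_of_forall fun j => Finset.mem_biUnion.mpr ?_
    obtain ⟨i, ⟨hi, hj⟩, -⟩ := hpart j
    exact ⟨i, hi, hj⟩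
  rw [← hcover, Finset.prod_biUnion hdisj]

theorem mul_eq_mul_map_of_adjoin_eq_top {K R F : Type*} [CommSemiring K] [Semiring R]
    [Algebra K R] [FunLike F R R] [AlgHomClass F K R R] (ν : F) (u : R) {s : Set R}
    (hs : Algebra.adjoin K s = ⊤) (h : ∀ a ∈ s, a * u = u * ν a) (a : R) :
    a * u = u * ν a := by
  have ha : a ∈ Algebra.adjoin K s := hs ▸ Algebra.mem_top
  induction ha using Algebra.adjoin_induction with
  | mem b hb => exact h b hb
  | algebraMap r => rw [AlgHomClass.commutes, Algebra.commutes]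
  | add b c _ _ hb hc => rw [add_mul, hb, hc, map_add, mul_add]
  | mul b c _ _ hb hc => rw [mul_assoc, hc, ← mul_assoc, hb, map_mul, mul_assoc]

theorem prime_product_conjugation_is_nakayama_general {K R : Type*} [Field K] [Ring R]
    [Algebra K R] {N : ℕ} (x : Fin N → R) (lam : Fin N → Fin N → Kˣ)
    (hgen : Algebra.adjoin K (Set.range x) = ⊤)
    (y : Fin N → R) (Sset : Finset (Fin N)) (T : Fin N → Finset (Fin N))
    (hpart : ∀ j : Fin N, ∃! l : Fin N, l ∈ Sset ∧ j ∈ T l)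
    (hcomm : ∀ l ∈ Sset, ∀ j : Fin N,
      y l * x j = (((∏ i ∈ T l, lam j i)⁻¹ : Kˣ) : K) • (x j * y l))
    (L : List (Fin N)) (hLnd : L.Nodup) (hLmem : ∀ l : Fin N, l ∈ L ↔ l ∈ Sset)
    (ν : R ≃ₐ[K] R)
    (hν : ∀ k : Fin N, ν (x k) = ((∏ j : Fin N, lam k j : Kˣ) : K) • x k) :
    (∀ k : Fin N,
      x k * (L.map y).prod =
        ((∏ j : Fin N, lam k j : Kˣ) : K) • ((L.map y).prod * x k)) ∧
    (∀ a : R, a * (L.map y).prod = (L.map y).prod * ν a) := by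
  classical
  have hLS : L.toFinset = Sset := by ext l; simp [hLmem]
  have hxy : ∀ k, ∀ l ∈ L, x k * y l = (∏ i ∈ T l, lam k i) • (y l * x k) := fun k l hl => by
    rw [hcomm l ((hLmem l).mp hl) k, ← Units.smul_def, smul_inv_smul]
  have hx : ∀ k, x k * (L.map y).prod = ((∏ j, lam k j : Kˣ) : K) • ((L.map y).prod * x k) := by
    intro k
    rw [← Units.smul_def, List.mul_prod_map_eq_smul_prod_map_mul (M := Kˣ) _ _ _ _ (hxy k),
      ← List.prod_toFinset _ hLnd, hLS, Finset.prod_prod_eq_prod_univ_of_existsUnique _ _ hpart]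
  refine ⟨hx, mul_eq_mul_map_of_adjoin_eq_top ν _ hgen ?_⟩
  rintro _ ⟨k, rfl⟩
  rw [hx k, hν k, mul_smul_comm]

/-- Let `R` be a symmetric CGL extension with `y`-elements
`y_1, …, y_N`, and let `u` be the product (in some order `L`) of the homogeneous prime
elements `y l`, `l ∈ S = {l | s(l) = +∞}`.  Then `x_k u = (∏_j λ_{kj}) u x_k` for all
`k`, and consequently `a u = u ν(a)` for all `a ∈ R`, where `ν` is the Nakayama
automorphism of `R` (characterized on the generators by `ν(x_k) = (∏_j λ_{kj}) x_k`).
Here `T l = {p^m(l) | 0 ≤ m ≤ O₋(l)}`, these sets partition `[1,N]`, and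
`y_l x_j = α_{jl}⁻¹ x_j y_l` with `α_{jl} = ∏_{i ∈ T l} λ_{ji}`. -/
theorem prime_product_conjugation_is_nakayama {K R : Type*} [Field K] [Ring R]
    [Algebra K R] {N : ℕ} (x : Fin N → R) (lam : Fin N → Fin N → Kˣ)
    (hdiag : IsDiagonalizedIOE K x lam) (hskew : MulSkewSymm lam)
    (hgen : Algebra.adjoin K (Set.range x) = ⊤)
    (y : Fin N → R) (Sset : Finset (Fin N)) (T : Fin N → Finset (Fin N))
    (hpart : ∀ j : Fin N, ∃! l : Fin N, l ∈ Sset ∧ j ∈ T l)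
    (hcomm : ∀ l ∈ Sset, ∀ j : Fin N,
      y l * x j = (((∏ i ∈ T l, lam j i)⁻¹ : Kˣ) : K) • (x j * y l))
    (L : List (Fin N)) (hLnd : L.Nodup) (hLmem : ∀ l : Fin N, l ∈ L ↔ l ∈ Sset)
    (ν : R ≃ₐ[K] R)
    (hν : ∀ k : Fin N, ν (x k) = ((∏ j : Fin N, lam k j : Kˣ) : K) • x k) :
    (∀ k : Fin N,
      x k * (L.map y).prod =
        ((∏ j : Fin N, lam k j : Kˣ) : K) • ((L.map y).prod * x k)) ∧
    (∀ a : R, a * (L.map y).prod = (L.map y).prod * ν a) :=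
  prime_product_conjugation_is_nakayama_general x lam hgen y Sset T hpart hcomm L hLnd hLmem ν hν
end

section
/- Let R = ⨁_{n≥0} R^n be a locally finite connected graded K-algebra (R^0 = K, each R^d finite-dimensional), and let ψ be a K-algebra automorphism of R such that ψ(R^d) ⊆ R^{≥d} := ⨁_{n≥d} R^n for all d ≥ 0. Define ψ_0 : R → R by letting ψ_0(x) be the degree-d component of ψ(x) for x ∈ R^d, extended linearly. Then ψ_0 is a graded K-algebra automorphism of R, and ψ_0^{-1} ∘ ψ is unipotent, i.e., (ψ_0^{-1}ψ)(x) − x ∈ R^{≥ m+1} for all x ∈ R^m and all m ≥ 0. -/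
/-!
`ψ` preserves the filtration `R^{≥m}`, and each quotient `R / R^{≥m}` is finite-dimensional, so
the endomorphism that `ψ` induces there is surjective, hence injective: `ψ x ∈ R^{≥m}` forces
`x ∈ R^{≥m}`. Hence the degree-preserving part `R^d → R^d` of `ψ` is injective, thus bijective,
and these parts assemble into a linear automorphism `ψ₀` of `R`. It is multiplicative because
the lowest-degree part of a product is the product of the lowest-degree parts. For `x ∈ R^m`,
`ψ x - ψ₀ x ∈ R^{≥m+1}`, and the same quotient argument applied to the graded map `ψ₀` shows
that `ψ₀⁻¹` preserves `R^{≥m+1}`.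
-/

open DirectSum

section GradedModule

variable {K M : Type*} [Ring K] [AddCommGroup M] [Module K M] (𝒜 : ℕ → Submodule K M)

def degreeGE (m : ℕ) : Submodule K M := ⨆ n : ℕ, ⨆ (_ : m ≤ n), 𝒜 n

variable {𝒜} in
theorem mem_degreeGE_of_mem {m n : ℕ} (h : m ≤ n) {x : M} (hx : x ∈ 𝒜 n) : x ∈ degreeGE 𝒜 m :=
  Submodule.mem_iSup_of_mem n (Submodule.mem_iSup_of_mem h hx)

theorem degreeGE_antitone : Antitone (degreeGE 𝒜) := fun _ _ h =>
  iSup₂_le fun _ hk _ hx => mem_degreeGE_of_mem (h.trans hk) hx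

theorem degreeGE_le_comap {f : M →ₗ[K] M} (hf : ∀ d, ∀ x ∈ 𝒜 d, f x ∈ degreeGE 𝒜 d) (m : ℕ) :
    degreeGE 𝒜 m ≤ (degreeGE 𝒜 m).comap f :=
  iSup₂_le fun _ hn x hx => degreeGE_antitone 𝒜 hn (hf _ x hx)

variable [Decomposition 𝒜]

theorem mem_degreeGE_iff {m : ℕ} {x : M} :
    x ∈ degreeGE 𝒜 m ↔ ∀ i < m, (decompose 𝒜 x i : M) = 0 := by
  classical
  constructor
  · intro hx i hi
    have hker : degreeGE 𝒜 m ≤ LinearMap.ker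
        (component K ℕ (fun i => 𝒜 i) i ∘ₗ (decomposeLinearEquiv 𝒜).toLinearMap) :=
      iSup₂_le fun n hn y hy => by
        simpa [decomposeLinearEquiv_apply, ← apply_eq_component] using
          decompose_of_mem_ne 𝒜 hy (by omega : n ≠ i)
    simpa [decomposeLinearEquiv_apply, ← apply_eq_component] using hker hx
  · intro h
    rw [← sum_support_decompose 𝒜 x]
    refine Submodule.sum_mem _ fun i _ => ?_
    rcases lt_or_ge i m with him | hmi
    · rw [h i him]; exact zero_mem _
    · exact mem_degreeGE_of_mem hmi (SetLike.coe_mem _)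

theorem sub_sum_decompose_mem_degreeGE (x : M) (m : ℕ) :
    x - ∑ i ∈ Finset.range m, (decompose 𝒜 x i : M) ∈ degreeGE 𝒜 m := by
  refine (mem_degreeGE_iff 𝒜).2 fun i hi => ?_
  rw [decompose_sub, DirectSum.sub_apply, Submodule.coe_sub, decompose_sum,
    DFinsupp.finsetSum_apply, Submodule.coe_sum, Finset.sum_eq_single_of_mem i (Finset.mem_range.2 hi)
      fun j _ hji => decompose_of_mem_ne 𝒜 (SetLike.coe_mem _) hji,
    decompose_of_mem_same 𝒜 (SetLike.coe_mem _), sub_self]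

theorem sub_decompose_mem_degreeGE {m : ℕ} {x : M} (hx : x ∈ degreeGE 𝒜 m) :
    x - (decompose 𝒜 x m : M) ∈ degreeGE 𝒜 (m + 1) := by
  have hlow : ∑ i ∈ Finset.range m, (decompose 𝒜 x i : M) = 0 :=
    Finset.sum_eq_zero fun i hi => (mem_degreeGE_iff 𝒜).1 hx i (Finset.mem_range.1 hi)
  simpa [Finset.sum_range_succ, hlow] using sub_sum_decompose_mem_degreeGE 𝒜 x (m + 1)

theorem finite_quotient_degreeGE (hlf : ∀ d, Module.Finite K (𝒜 d)) (m : ℕ) :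
    Module.Finite K (M ⧸ degreeGE 𝒜 m) := by
  let G : Submodule K M := ⨆ i ∈ Finset.range m, 𝒜 i
  have : Module.Finite K G := Module.Finite.iff_fg.2 <|
    Submodule.fg_biSup _ _ fun i _ => Module.Finite.iff_fg.1 (hlf i)
  refine Module.Finite.of_surjective ((degreeGE 𝒜 m).mkQ ∘ₗ G.subtype) fun y => ?_
  obtain ⟨x, rfl⟩ := (degreeGE 𝒜 m).mkQ_surjective y
  have hG : ∑ i ∈ Finset.range m, (decompose 𝒜 x i : M) ∈ G :=
    Submodule.sum_mem _ fun i hi =>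
      Submodule.mem_iSup_of_mem i (Submodule.mem_iSup_of_mem hi (SetLike.coe_mem _))
  refine ⟨⟨_, hG⟩, (Submodule.Quotient.eq _).2 ?_⟩
  simpa using (degreeGE 𝒜 m).neg_mem (sub_sum_decompose_mem_degreeGE 𝒜 x m)

def gradedPart (f : M →ₗ[K] M) (d : ℕ) : 𝒜 d →ₗ[K] 𝒜 d :=
  component K ℕ (fun i => 𝒜 i) d ∘ₗ (decomposeLinearEquiv 𝒜).toLinearMap ∘ₗ f ∘ₗ (𝒜 d).subtype

theorem gradedPart_apply (f : M →ₗ[K] M) (d : ℕ) (x : 𝒜 d) :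
    gradedPart 𝒜 f d x = decompose 𝒜 (f x) d :=
  rfl

def gradedLinearEquiv (e : ∀ d, 𝒜 d ≃ₗ[K] 𝒜 d) : M ≃ₗ[K] M :=
  decomposeLinearEquiv 𝒜 ≪≫ₗ DFinsupp.mapRange.linearEquiv e ≪≫ₗ (decomposeLinearEquiv 𝒜).symm

theorem gradedLinearEquiv_apply_of_mem (e : ∀ d, 𝒜 d ≃ₗ[K] 𝒜 d) {d : ℕ} {x : M} (hx : x ∈ 𝒜 d) :
    gradedLinearEquiv 𝒜 e x = e d ⟨x, hx⟩ := by
  classical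
  have hsingle : DFinsupp.mapRange.linearEquiv e (of (fun i => 𝒜 i) d ⟨x, hx⟩) =
      of (fun i => 𝒜 i) d (e d ⟨x, hx⟩) :=
    DFinsupp.mapRange_single (hf := fun i => map_zero (e i))
  rw [gradedLinearEquiv, LinearEquiv.trans_apply, LinearEquiv.trans_apply,
    decomposeLinearEquiv_apply, decompose_of_mem 𝒜 hx, hsingle, decomposeLinearEquiv_symm_apply,
    decompose_symm_of]

end GradedModule

theorem Submodule.comap_eq_self_of_le_comap {K V : Type*} [CommRing K] [AddCommGroup V]
    [Module K V] {W : Submodule K V} [Module.Finite K (V ⧸ W)] {f : V →ₗ[K] V}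
    (hf : Function.Surjective f) (hW : W ≤ W.comap f) : W.comap f = W := by
  refine le_antisymm (fun x hx => ?_) hW
  have hsurj : Function.Surjective (W.mapQ W f hW) := by
    rintro ⟨y⟩
    obtain ⟨z, rfl⟩ := hf y
    exact ⟨Submodule.Quotient.mk z, rfl⟩
  -- a surjective endomorphism of a finitely generated module over a commutative ring is injective
  have hinj := OrzechProperty.injective_of_surjective_endomorphism _ hsurj
  rw [← Submodule.Quotient.mk_eq_zero]
  exact hinj (by simpa [Submodule.mapQ_apply] using hx)

section Injectivity

variable {K M : Type*} [CommRing K] [AddCommGroup M] [Module K M] (𝒜 : ℕ → Submodule K M)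
  [Decomposition 𝒜] (hlf : ∀ d, Module.Finite K (𝒜 d))
  (f : M →ₗ[K] M) (hf : Function.Surjective f) (hfil : ∀ d, ∀ x ∈ 𝒜 d, f x ∈ degreeGE 𝒜 d)
include hlf hf hfil

theorem mem_degreeGE_of_apply_mem {m : ℕ} {x : M} (hx : f x ∈ degreeGE 𝒜 m) :
    x ∈ degreeGE 𝒜 m := by
  have := finite_quotient_degreeGE 𝒜 hlf m
  rw [← Submodule.comap_eq_self_of_le_comap hf (degreeGE_le_comap 𝒜 hfil m)]
  exact hx

theorem gradedPart_injective (d : ℕ) : Function.Injective (gradedPart 𝒜 f d) := by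
  refine (injective_iff_map_eq_zero _).2 fun x hx => Subtype.ext ?_
  have hfx : f x ∈ degreeGE 𝒜 (d + 1) := (mem_degreeGE_iff 𝒜).2 fun i hi => by
    rcases Nat.lt_succ_iff_lt_or_eq.1 hi with hid | rfl
    · exact (mem_degreeGE_iff 𝒜).1 (hfil d x x.2) i hid
    · rw [← gradedPart_apply, hx, ZeroMemClass.coe_zero]
  have := (mem_degreeGE_iff 𝒜).1 (mem_degreeGE_of_apply_mem 𝒜 hlf f hf hfil hfx) d d.lt_succ_self
  rwa [decompose_of_mem_same 𝒜 x.2] at this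

end Injectivity

section GradedPartEquiv

variable {K M : Type*} [Field K] [AddCommGroup M] [Module K M] (𝒜 : ℕ → Submodule K M)
  [Decomposition 𝒜] (hlf : ∀ d, Module.Finite K (𝒜 d))
  (f : M →ₗ[K] M) (hf : Function.Surjective f) (hfil : ∀ d, ∀ x ∈ 𝒜 d, f x ∈ degreeGE 𝒜 d)
include hlf hf hfil

theorem gradedPart_bijective (d : ℕ) : Function.Bijective (gradedPart 𝒜 f d) :=
  have := hlf d
  have hinj := gradedPart_injective 𝒜 hlf f hf hfil d
  ⟨hinj, LinearMap.injective_iff_surjective.1 hinj⟩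

noncomputable def gradedPartEquiv : M ≃ₗ[K] M :=
  gradedLinearEquiv 𝒜 fun d => .ofBijective _ (gradedPart_bijective 𝒜 hlf f hf hfil d)

theorem gradedPartEquiv_apply_of_mem {d : ℕ} {x : M} (hx : x ∈ 𝒜 d) :
    gradedPartEquiv 𝒜 hlf f hf hfil x = decompose 𝒜 (f x) d :=
  gradedLinearEquiv_apply_of_mem 𝒜 _ hx

end GradedPartEquiv

section Multiplicativity

variable {K R : Type*} [CommRing K] [Ring R] [Algebra K R] (𝒜 : ℕ → Submodule K R)

theorem degreeGE_mul_le [SetLike.GradedMonoid 𝒜] (m n : ℕ) :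
    degreeGE 𝒜 m * degreeGE 𝒜 n ≤ degreeGE 𝒜 (m + n) := by
  simp_rw [degreeGE, Submodule.iSup_mul, Submodule.mul_iSup, iSup_le_iff]
  exact fun i hi j hj => Submodule.mul_le.2 fun x hx y hy =>
    mem_degreeGE_of_mem (add_le_add hi hj) (SetLike.mul_mem_graded hx hy)

variable [GradedAlgebra 𝒜]

theorem decompose_mul_of_mem_degreeGE {m n : ℕ} {x y : R} (hx : x ∈ degreeGE 𝒜 m)
    (hy : y ∈ degreeGE 𝒜 n) :
    (decompose 𝒜 (x * y) (m + n) : R) = decompose 𝒜 x m * decompose 𝒜 y n := by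
  set xm : R := (decompose 𝒜 x m : R)
  set yn : R := (decompose 𝒜 y n : R)
  have hxm : xm ∈ 𝒜 m := SetLike.coe_mem _
  have hyn : yn ∈ 𝒜 n := SetLike.coe_mem _
  have hsplit : x * y = xm * yn + (xm * (y - yn) + (x - xm) * y) := by noncomm_ring
  have hhigh : xm * (y - yn) + (x - xm) * y ∈ degreeGE 𝒜 (m + n + 1) := by
    refine add_mem ?_ ?_
    · simpa [add_assoc] using degreeGE_mul_le 𝒜 m (n + 1)
        (Submodule.mul_mem_mul (mem_degreeGE_of_mem le_rfl hxm) (sub_decompose_mem_degreeGE 𝒜 hy))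
    · simpa [add_right_comm] using degreeGE_mul_le 𝒜 (m + 1) n
        (Submodule.mul_mem_mul (sub_decompose_mem_degreeGE 𝒜 hx) hy)
  rw [hsplit, decompose_add, DirectSum.add_apply, Submodule.coe_add,
    (mem_degreeGE_iff 𝒜).1 hhigh _ (m + n).lt_succ_self, add_zero,
    decompose_of_mem_same 𝒜 (SetLike.mul_mem_graded hxm hyn)]

theorem LinearMap.map_mul_of_map_mul_of_mem {S : Type*} [Semiring S] [Module K S]
    (f : R →ₗ[K] S) (h : ∀ i j, ∀ x ∈ 𝒜 i, ∀ y ∈ 𝒜 j, f (x * y) = f x * f y) (x y : R) :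
    f (x * y) = f x * f y := by
  induction x using Decomposition.inductionOn 𝒜 with
  | zero => simp
  | add a b ha hb => rw [add_mul, map_add, ha, hb, map_add, add_mul]
  | homogeneous a =>
    induction y using Decomposition.inductionOn 𝒜 with
    | zero => simp
    | add b c hb hc => rw [mul_add, map_add, hb, hc, map_add, mul_add]
    | homogeneous b => exact h _ _ _ a.2 _ b.2

variable (ψ : R →ₐ[K] R) (g : R →ₗ[K] R)
  (hg : ∀ d, ∀ x ∈ 𝒜 d, g x = decompose 𝒜 (ψ x) d)
include hg

theorem map_one_of_apply_eq_decompose : g 1 = 1 := by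
  rw [hg 0 1 SetLike.GradedOne.one_mem, map_one, decompose_of_mem_same 𝒜 SetLike.GradedOne.one_mem]

theorem map_mul_of_apply_eq_decompose (hψ : ∀ d, ∀ x ∈ 𝒜 d, ψ x ∈ degreeGE 𝒜 d) (x y : R) :
    g (x * y) = g x * g y :=
  g.map_mul_of_map_mul_of_mem 𝒜 (fun i j x hx y hy => by
    rw [hg i x hx, hg j y hy, hg (i + j) _ (SetLike.mul_mem_graded hx hy), map_mul,
      decompose_mul_of_mem_degreeGE 𝒜 (hψ i x hx) (hψ j y hy)]) x y

end Multiplicativity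

section GradedPartAlgEquiv

variable {K R : Type*} [Field K] [Ring R] [Algebra K R] (𝒜 : ℕ → Submodule K R) [GradedAlgebra 𝒜]
  (hlf : ∀ d, Module.Finite K (𝒜 d)) (ψ : R ≃ₐ[K] R) (hψ : ∀ d, ∀ x ∈ 𝒜 d, ψ x ∈ degreeGE 𝒜 d)

noncomputable def gradedPartAlgEquiv : R ≃ₐ[K] R :=
  have hψ₀ := fun d x (hx : x ∈ 𝒜 d) =>
    gradedPartEquiv_apply_of_mem 𝒜 hlf ψ.toLinearMap ψ.surjective hψ hx
  .ofLinearEquiv _ (map_one_of_apply_eq_decompose 𝒜 ψ.toAlgHom _ hψ₀)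
    (map_mul_of_apply_eq_decompose 𝒜 ψ.toAlgHom _ hψ₀ hψ)

theorem gradedPartAlgEquiv_apply_of_mem {d : ℕ} {x : R} (hx : x ∈ 𝒜 d) :
    gradedPartAlgEquiv 𝒜 hlf ψ hψ x = decompose 𝒜 (ψ x) d :=
  gradedPartEquiv_apply_of_mem 𝒜 hlf ψ.toLinearMap ψ.surjective hψ hx

end GradedPartAlgEquiv

theorem degree_zero_component_is_graded_automorphism_general {K R : Type*} [Field K] [Ring R]
    [Algebra K R] (𝒜 : ℕ → Submodule K R) [GradedAlgebra 𝒜]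
    (hlf : ∀ d : ℕ, Module.Finite K (𝒜 d))
    (ψ : R ≃ₐ[K] R)
    (hψ : ∀ (d : ℕ), ∀ x ∈ 𝒜 d, ψ x ∈ ⨆ n : ℕ, ⨆ (_ : d ≤ n), 𝒜 n) :
    ∃ ψ₀ : R ≃ₐ[K] R,
      (∀ (d : ℕ), ∀ x ∈ 𝒜 d, ψ₀ x = (DirectSum.decompose 𝒜 (ψ x) d : R)) ∧
      (∀ (d : ℕ), ∀ x ∈ 𝒜 d, ψ₀ x ∈ 𝒜 d) ∧
      (∀ (m : ℕ), ∀ x ∈ 𝒜 m,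
        ψ₀.symm (ψ x) - x ∈ ⨆ n : ℕ, ⨆ (_ : m + 1 ≤ n), 𝒜 n) := by
  set ψ₀ := gradedPartAlgEquiv 𝒜 hlf ψ hψ
  have hψ₀ : ∀ d, ∀ x ∈ 𝒜 d, ψ₀ x = decompose 𝒜 (ψ x) d := fun d x hx =>
    gradedPartAlgEquiv_apply_of_mem 𝒜 hlf ψ hψ hx
  have hgraded : ∀ d, ∀ x ∈ 𝒜 d, ψ₀ x ∈ 𝒜 d := fun d x hx => hψ₀ d x hx ▸ SetLike.coe_mem _
  refine ⟨ψ₀, hψ₀, hgraded, fun m x hx => ?_⟩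
  have hlead : ψ x - ψ₀ x ∈ degreeGE 𝒜 (m + 1) :=
    hψ₀ m x hx ▸ sub_decompose_mem_degreeGE 𝒜 (hψ m x hx)
  refine mem_degreeGE_of_apply_mem 𝒜 hlf ψ₀.toLinearMap ψ₀.surjective
    (fun d y hy => mem_degreeGE_of_mem le_rfl (hgraded d y hy)) ?_
  simpa using hlead

/-- Let `R` be a locally finite connected graded `K`-algebra and `ψ`
an automorphism with `ψ(R^d) ⊆ R^{≥d}` for all `d`.  Then the degree-zero component
`ψ₀` of `ψ` is a graded algebra automorphism and `ψ₀⁻¹ ∘ ψ` is unipotent. -/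
theorem degree_zero_component_is_graded_automorphism {K R : Type*} [Field K] [Ring R]
    [Algebra K R] (𝒜 : ℕ → Submodule K R) [GradedAlgebra 𝒜]
    (hconn : 𝒜 0 = 1)
    (hlf : ∀ d : ℕ, Module.Finite K (𝒜 d))
    (ψ : R ≃ₐ[K] R)
    (hψ : ∀ (d : ℕ), ∀ x ∈ 𝒜 d, ψ x ∈ ⨆ n : ℕ, ⨆ (_ : d ≤ n), 𝒜 n) :
    ∃ ψ₀ : R ≃ₐ[K] R,
      (∀ (d : ℕ), ∀ x ∈ 𝒜 d, ψ₀ x = (DirectSum.decompose 𝒜 (ψ x) d : R)) ∧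
      (∀ (d : ℕ), ∀ x ∈ 𝒜 d, ψ₀ x ∈ 𝒜 d) ∧
      (∀ (m : ℕ), ∀ x ∈ 𝒜 m,
        ψ₀.symm (ψ x) - x ∈ ⨆ n : ℕ, ⨆ (_ : m + 1 ≤ n), 𝒜 n) :=
  degree_zero_component_is_graded_automorphism_general 𝒜 hlf ψ hψ
end

section
/- Let q ∈ K^× not be a root of unity and let R = O_q(K^3) = K⟨x_1, x_2, x_3 : x_i x_j = q x_j x_i for i < j⟩, graded with deg x_i = 1. Every unipotent automorphism ψ of R has the form ψ(x_1) = x_1, ψ(x_2) = x_2 + ξ x_1 x_3 for some ξ ∈ K, ψ(x_3) = x_3. -/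
/-!
Write `b m = x₁ ^ m.1 * x₂ ^ m.2.1 * x₃ ^ m.2.2`, so that `b m * b n` is a nonzero multiple of
`b (m + n)`. For a monomial order on `ℕ³` the leading and the trailing monomial of a product are
the sums of those of the factors; hence if `Y ≠ 0` and `Y * b e' = Z * Y`, then `Z` is a multiple
of `b e'`. Each `b e` is normal, so `ψ (b e)` is normal too, and comparing coefficients in
`ψ (b e) * b e' = λ • (b e' * ψ (b e))` shows that all monomials of `ψ (b e)` have the same
commutation scalar with `b e'`. As `q` is not a root of unity, the monomials of `ψ (b e)` then
differ from `e` by multiples of `(1, -1, 1)`, the radical of the commutation form. For `e` of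
degree one this leaves only `e`, and also `(1, 0, 1)` when `e = (0, 1, 0)`; by unipotence the
coefficient of `e` is `1`.
-/

open Module

namespace TwistedMonomialBasis

variable {K R M : Type*}

section CommSemiring

variable [CommSemiring K] [Semiring R] [Algebra K R] [AddCommMonoid M] {b : Basis M K R}
  {c : M → M → K}

theorem repr_mul (hb : ∀ m n, b m * b n = c m n • b (m + n)) (r s : R) :
    b.repr (r * s) = ∑ p ∈ (b.repr r).support ×ˢ (b.repr s).support,
      Finsupp.single (p.1 + p.2) (b.repr r p.1 * b.repr s p.2 * c p.1 p.2) := by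
  conv_lhs => rw [← b.linearCombination_repr r, ← b.linearCombination_repr s]
  simp only [Finsupp.linearCombination_apply, Finsupp.sum, Finset.sum_mul_sum, Finset.sum_product,
    smul_mul_smul_comm, hb, smul_smul, map_sum, map_smul, b.repr_self, Finsupp.smul_single,
    smul_eq_mul, mul_one]

theorem exists_add_eq_of_mem_support_mul (hb : ∀ m n, b m * b n = c m n • b (m + n)) {r s : R}
    {k : M} (hk : k ∈ (b.repr (r * s)).support) :
    ∃ n ∈ (b.repr r).support, ∃ m ∈ (b.repr s).support, n + m = k := by
  classical
  rw [Finsupp.mem_support_iff, repr_mul hb, Finsupp.finsetSum_apply] at hk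
  obtain ⟨⟨n, m⟩, hnm, hne⟩ := Finset.exists_ne_zero_of_sum_ne_zero hk
  rw [Finset.mem_product] at hnm
  exact ⟨n, hnm.1, m, hnm.2, by_contra fun h => hne (Finsupp.single_eq_of_ne (Ne.symm h))⟩

theorem repr_mul_apply_add_of_unique (hb : ∀ m n, b m * b n = c m n • b (m + n)) {r s : R}
    {n₀ m₀ : M} (huniq : ∀ n ∈ (b.repr r).support, ∀ m ∈ (b.repr s).support,
      n + m = n₀ + m₀ → n = n₀ ∧ m = m₀) :
    b.repr (r * s) (n₀ + m₀) = b.repr r n₀ * b.repr s m₀ * c n₀ m₀ := by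
  rw [repr_mul hb, Finsupp.finsetSum_apply, Finset.sum_eq_single (n₀, m₀)]
  · exact Finsupp.single_eq_same
  · rintro ⟨n, m⟩ hnm hne
    rw [Finset.mem_product] at hnm
    refine Finsupp.single_eq_of_ne fun h => hne ?_
    obtain ⟨rfl, rfl⟩ := huniq n hnm.1 m hnm.2 h.symm
    rfl
  · intro hnm
    rw [Finset.mem_product, Finsupp.mem_support_iff, Finsupp.mem_support_iff, not_and_or,
      not_not, not_not] at hnm
    rcases hnm with h | h <;> simp [h]

variable [IsCancelAdd M]

theorem repr_mul_basis_apply_add (hb : ∀ m n, b m * b n = c m n • b (m + n)) (r : R) (m e : M) :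
    b.repr (r * b e) (m + e) = b.repr r m * c m e := by
  rw [repr_mul_apply_add_of_unique hb fun n _ k hk hnk => ?_, b.repr_self, Finsupp.single_eq_same,
    mul_one]
  rw [b.repr_self] at hk
  obtain rfl : k = e := Finset.mem_singleton.1 (Finsupp.support_single_subset hk)
  exact ⟨add_right_cancel hnk, rfl⟩

theorem repr_basis_mul_apply_add (hb : ∀ m n, b m * b n = c m n • b (m + n)) (r : R) (e m : M) :
    b.repr (b e * r) (e + m) = c e m * b.repr r m := by
  rw [repr_mul_apply_add_of_unique hb fun k hk n _ hkn => ?_, b.repr_self, Finsupp.single_eq_same,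
    one_mul, mul_comm]
  rw [b.repr_self] at hk
  obtain rfl : k = e := Finset.mem_singleton.1 (Finsupp.support_single_subset hk)
  exact ⟨rfl, add_left_cancel hkn⟩

end CommSemiring

section Field

variable [Field K] [Ring R] [Algebra K R]

theorem exists_basis_mul_eq_mul_basis [AddCommMonoid M] {b : Basis M K R} {c : M → M → K}
    (hb : ∀ m n, b m * b n = c m n • b (m + n)) (hc : ∀ m n, c m n ≠ 0) (e : M) (r : R) :
    ∃ r', b e * r = r' * b e := by
  refine ⟨b.constr K (fun m => (c e m / c m e) • b m) r, ?_⟩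
  suffices LinearMap.mulLeft K (b e) =
      LinearMap.mulRight K (b e) ∘ₗ b.constr K (fun m => (c e m / c m e) • b m) from
    LinearMap.congr_fun this r
  refine b.ext fun m => ?_
  simp [hb, smul_smul, div_mul_cancel₀ _ (hc m e), add_comm]

section LinearOrder

variable [LinearOrder M] {b : Basis M K R}

theorem eq_smul_basis_of_max_eq_of_min_eq {X : R} {e : M}
    (hmax : (b.repr X).support.max = e) (hmin : (b.repr X).support.min = e) :
    X = b.repr X e • b e := by
  classical
  refine b.ext_elem_iff.2 fun n => ?_
  rw [map_smul, b.repr_self, Finsupp.smul_apply, Finsupp.single_apply, smul_eq_mul]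
  split_ifs with hn
  · rw [hn, mul_one]
  rw [mul_zero]
  by_contra hX
  have hmem := Finsupp.mem_support_iff.2 hX
  exact hn (le_antisymm (Finset.min_le_of_eq hmem hmin) (Finset.le_max_of_eq hmem hmax))

variable [AddCommMonoid M] [IsOrderedCancelAddMonoid M] {c : M → M → K}

theorem max_support_mul (hb : ∀ m n, b m * b n = c m n • b (m + n)) (hc : ∀ m n, c m n ≠ 0)
    (r s : R) :
    (b.repr (r * s)).support.max = (b.repr r).support.max + (b.repr s).support.max := by
  rcases eq_or_ne r 0 with rfl | hr
  · simp
  rcases eq_or_ne s 0 with rfl | hs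
  · simp
  obtain ⟨n₀, hn₀⟩ := Finset.max_of_nonempty (Finsupp.support_nonempty_iff.2
    ((map_ne_zero_iff _ b.repr.injective).2 hr))
  obtain ⟨m₀, hm₀⟩ := Finset.max_of_nonempty (Finsupp.support_nonempty_iff.2
    ((map_ne_zero_iff _ b.repr.injective).2 hs))
  have hle {n m} (hn : n ∈ (b.repr r).support) (hm : m ∈ (b.repr s).support) : n ≤ n₀ ∧ m ≤ m₀ :=
    ⟨Finset.le_max_of_eq hn hn₀, Finset.le_max_of_eq hm hm₀⟩
  have htop : n₀ + m₀ ∈ (b.repr (r * s)).support := by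
    rw [Finsupp.mem_support_iff, repr_mul_apply_add_of_unique hb fun n hn m hm h =>
      (add_eq_add_iff_eq_and_eq (hle hn hm).1 (hle hn hm).2).1 h]
    exact mul_ne_zero (mul_ne_zero (Finsupp.mem_support_iff.1 (Finset.mem_of_max hn₀))
      (Finsupp.mem_support_iff.1 (Finset.mem_of_max hm₀))) (hc n₀ m₀)
  rw [hn₀, hm₀, ← WithBot.coe_add]
  refine le_antisymm (Finset.max_le fun k hk => ?_) (Finset.le_max htop)
  obtain ⟨n, hn, m, hm, rfl⟩ := exists_add_eq_of_mem_support_mul hb hk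
  exact WithBot.coe_le_coe.2 (add_le_add (hle hn hm).1 (hle hn hm).2)

theorem max_support_eq_of_mul_eq (hb : ∀ m n, b m * b n = c m n • b (m + n))
    (hc : ∀ m n, c m n ≠ 0) {Y Z W : R} (hY : Y ≠ 0) (h : Z * Y = Y * W) :
    (b.repr Z).support.max = (b.repr W).support.max := by
  have hY' : (b.repr Y).support.max ≠ ⊥ := by
    simpa [Finset.max_eq_bot] using hY
  have := max_support_mul hb hc Z Y
  rw [h, max_support_mul hb hc, add_comm (b.repr Y).support.max] at this
  exact (WithBot.add_right_cancel hY' this).symm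

theorem min_support_eq_of_mul_eq (hb : ∀ m n, b m * b n = c m n • b (m + n))
    (hc : ∀ m n, c m n ≠ 0) {Y Z W : R} (hY : Y ≠ 0) (h : Z * Y = Y * W) :
    (b.repr Z).support.min = (b.repr W).support.min :=
  congrArg WithBot.ofDual (max_support_eq_of_mul_eq (M := Mᵒᵈ) hb hc hY h)

theorem eq_smul_basis_of_mul_basis_eq_mul (hb : ∀ m n, b m * b n = c m n • b (m + n))
    (hc : ∀ m n, c m n ≠ 0) {Y Z : R} {e : M} (hY : Y ≠ 0) (h : Y * b e = Z * Y) :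
    Z = b.repr Z e • b e := by
  refine eq_smul_basis_of_max_eq_of_min_eq ?_ ?_
  · rw [max_support_eq_of_mul_eq hb hc hY h.symm]; simp
  · rw [min_support_eq_of_mul_eq hb hc hY h.symm]; simp

theorem cross_mul_eq_of_mul_basis_eq_mul (hb : ∀ m n, b m * b n = c m n • b (m + n))
    (hc : ∀ m n, c m n ≠ 0) {Y Z : R} {e m m' : M} (hY : Y ≠ 0) (h : Y * b e = Z * Y)
    (hm : m ∈ (b.repr Y).support) (hm' : m' ∈ (b.repr Y).support) :
    c m e * c e m' = c e m * c m' e := by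
  obtain ⟨μ, rfl⟩ : ∃ μ : K, Z = μ • b e := ⟨_, eq_smul_basis_of_mul_basis_eq_mul hb hc hY h⟩
  have key {n} (hn : n ∈ (b.repr Y).support) : c n e = μ * c e n := by
    refine mul_left_cancel₀ (Finsupp.mem_support_iff.1 hn) ?_
    calc b.repr Y n * c n e = b.repr (Y * b e) (n + e) := (repr_mul_basis_apply_add hb _ _ _).symm
      _ = μ * (c e n * b.repr Y n) := by
        rw [h, smul_mul_assoc, map_smul, Finsupp.smul_apply, add_comm,
          repr_basis_mul_apply_add hb, smul_eq_mul]
      _ = b.repr Y n * (μ * c e n) := by ring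
  rw [key hm, key hm']
  ring

end LinearOrder

end Field

end TwistedMonomialBasis

namespace Module.Basis

variable {ι R V : Type*}

theorem sum_repr_of_support_subset [Semiring R] [AddCommMonoid V] [Module R V] (b : Basis ι R V)
    {x : V} {s : Finset ι} (h : (b.repr x).support ⊆ s) :
    ∑ i ∈ s, b.repr x i • b i = x := by
  conv_rhs => rw [← b.linearCombination_repr x]
  exact (Finsupp.linearCombination_apply_of_mem_supported R
    ((Finsupp.mem_supported R _).2 (by exact_mod_cast h))).symm

theorem repr_apply_eq_one_of_sub_mem_span [Ring R] [AddCommGroup V] [Module R V] (b : Basis ι R V)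
    {x : V} {i : ι} {s : Set ι} (h : x - b i ∈ Submodule.span R (b '' s)) (hi : i ∉ s) :
    b.repr x i = 1 := by
  have : b.repr (x - b i) i = 0 :=
    Finsupp.notMem_support_iff.1 fun hmem => hi (b.mem_span_image.1 h hmem)
  rwa [map_sub, b.repr_self, Finsupp.sub_apply, Finsupp.single_eq_same, sub_eq_zero] at this

end Module.Basis

namespace QuantumAffineSpace

variable {K R : Type*} [Field K] [Ring R] [Algebra K R]

theorem pow_mul_pow_mul_of_mul_eq_smul {x y : R} {c : K} (h : y * x = c • (x * y)) (m n : ℕ)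
    (t : R) : y ^ n * (x ^ m * t) = c ^ (m * n) • (x ^ m * (y ^ n * t)) := by
  have hm : y * x ^ m = (c ^ m • x ^ m) * y := by
    rw [← smul_pow]
    refine SemiconjBy.pow_right ?_ m
    rwa [SemiconjBy, smul_mul_assoc]
  induction n with
  | zero => simp
  | succ n ih =>
    rw [pow_succ', mul_assoc, ih, mul_smul_comm, ← mul_assoc, hm]
    simp only [smul_mul_assoc, smul_smul, mul_assoc]
    ring_nf

-- The number of swaps `x_j x_i ↦ q⁻¹ • x_i x_j` (`i < j`) that reorder `b m * b n` into
-- `b (m + n)`.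
def mulExponent (m n : ℕ × ℕ × ℕ) : ℕ := n.1 * (m.2.1 + m.2.2) + n.2.1 * m.2.2

theorem monomial_mul_monomial {x₁ x₂ x₃ : R} {u : K} (h21 : x₂ * x₁ = u • (x₁ * x₂))
    (h31 : x₃ * x₁ = u • (x₁ * x₃)) (h32 : x₃ * x₂ = u • (x₂ * x₃)) (m n : ℕ × ℕ × ℕ) :
    x₁ ^ m.1 * x₂ ^ m.2.1 * x₃ ^ m.2.2 * (x₁ ^ n.1 * x₂ ^ n.2.1 * x₃ ^ n.2.2) =
      u ^ mulExponent m n • (x₁ ^ (m + n).1 * x₂ ^ (m + n).2.1 * x₃ ^ (m + n).2.2) := by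
  obtain ⟨a, b, c⟩ := m
  obtain ⟨a', b', c'⟩ := n
  simp only [mulExponent, Prod.mk_add_mk, pow_add, mul_assoc, mul_smul_comm, smul_smul,
    pow_mul_pow_mul_of_mul_eq_smul h31, pow_mul_pow_mul_of_mul_eq_smul h21,
    pow_mul_pow_mul_of_mul_eq_smul h32]
  ring_nf

variable {q : Kˣ} {b : Basis (ℕ × ℕ × ℕ) K R}

theorem pow_inv_injective (hq : ∀ k : ℕ, 0 < k → q ^ k ≠ 1) :
    Function.Injective fun n : ℕ => ((q : K)⁻¹) ^ n := by
  have : ¬IsOfFinOrder q⁻¹ := by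
    rw [isOfFinOrder_inv_iff, isOfFinOrder_iff_pow_eq_one]
    rintro ⟨k, hk, h⟩
    exact hq k hk h
  intro s t h
  refine injective_pow_iff_not_isOfFinOrder.2 this (Units.ext ?_)
  simpa using h

theorem partialDegrees_eq_of_mem_support (hq : ∀ k : ℕ, 0 < k → q ^ k ≠ 1)
    (hb : ∀ m n, b m * b n = ((q : K)⁻¹) ^ mulExponent m n • b (m + n)) {Y : R} (hY : Y ≠ 0)
    (hnormal : ∀ s, ∃ Z, Y * s = Z * Y) {m m' : ℕ × ℕ × ℕ} (hm : m ∈ (b.repr Y).support)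
    (hm' : m' ∈ (b.repr Y).support) :
    m.1 + m.2.1 = m'.1 + m'.2.1 ∧ m.2.1 + m.2.2 = m'.2.1 + m'.2.2 := by
  have cross (e : ℕ × ℕ × ℕ) :
      mulExponent m e + mulExponent e m' = mulExponent e m + mulExponent m' e := by
    obtain ⟨Z, hZ⟩ := hnormal (b e)
    apply pow_inv_injective hq
    -- `b` read as indexed by `ℕ³` with the lexicographic order, a monomial order
    simpa only [pow_add] using TwistedMonomialBasis.cross_mul_eq_of_mul_basis_eq_mul
      (M := Lex (ℕ × Lex (ℕ × ℕ))) (e := e) hb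
      (fun _ _ => pow_ne_zero _ (inv_ne_zero (Units.ne_zero q))) hY hZ hm hm'
  have h₁ := cross (1, 0, 0)
  have h₃ := cross (0, 0, 1)
  simp only [mulExponent] at h₁ h₃
  omega

theorem basis_mul_basis {x₁ x₂ x₃ : R} (h12 : x₁ * x₂ = (q : K) • (x₂ * x₁))
    (h13 : x₁ * x₃ = (q : K) • (x₃ * x₁)) (h23 : x₂ * x₃ = (q : K) • (x₃ * x₂))
    (hb : ∀ m, b m = x₁ ^ m.1 * x₂ ^ m.2.1 * x₃ ^ m.2.2) (m n : ℕ × ℕ × ℕ) :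
    b m * b n = ((q : K)⁻¹) ^ mulExponent m n • b (m + n) := by
  have hswap {x y : R} (h : x * y = (q : K) • (y * x)) : y * x = (q : K)⁻¹ • (x * y) :=
    (eq_inv_smul_iff₀ (Units.ne_zero q)).2 h.symm
  simp only [hb]
  exact monomial_mul_monomial (hswap h12) (hswap h13) (hswap h23) m n

theorem repr_map_basis_self_eq_one {x₁ x₂ x₃ : R}
    (hb : ∀ m, b m = x₁ ^ m.1 * x₂ ^ m.2.1 * x₃ ^ m.2.2) (ψ : R ≃ₐ[K] R) (hunip : ∀ r : R,
      r ∈ Submodule.span K {w : R | ∃ a b c : ℕ, a + b + c = 1 ∧ w = x₁ ^ a * x₂ ^ b * x₃ ^ c} →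
      ψ r - r ∈ Submodule.span K
        {w : R | ∃ a b c : ℕ, 2 ≤ a + b + c ∧ w = x₁ ^ a * x₂ ^ b * x₃ ^ c})
    {e : ℕ × ℕ × ℕ} (he : e.1 + e.2.1 + e.2.2 = 1) : b.repr (ψ (b e)) e = 1 := by
  refine b.repr_apply_eq_one_of_sub_mem_span (s := {n | 2 ≤ n.1 + n.2.1 + n.2.2})
    (Submodule.span_mono ?_ (hunip (b e) (Submodule.subset_span ⟨_, _, _, he, hb e⟩)))
    (by simp [he])
  rintro _ ⟨a, b', c, h, rfl⟩
  exact ⟨(a, b', c), h, hb _⟩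

theorem partialDegrees_eq_of_mem_support_map (hq : ∀ k : ℕ, 0 < k → q ^ k ≠ 1)
    (hb : ∀ m n, b m * b n = ((q : K)⁻¹) ^ mulExponent m n • b (m + n)) (ψ : R ≃ₐ[K] R)
    {e m : ℕ × ℕ × ℕ} (he : b.repr (ψ (b e)) e = 1) (hm : m ∈ (b.repr (ψ (b e))).support) :
    m.1 + m.2.1 = e.1 + e.2.1 ∧ m.2.1 + m.2.2 = e.2.1 + e.2.2 := by
  refine partialDegrees_eq_of_mem_support hq hb ((map_ne_zero_iff ψ ψ.injective).2 (b.ne_zero e))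
    (fun s => ?_) hm (Finsupp.mem_support_iff.2 (by rw [he]; exact one_ne_zero))
  obtain ⟨r, hr⟩ := TwistedMonomialBasis.exists_basis_mul_eq_mul_basis hb
    (fun _ _ => pow_ne_zero _ (inv_ne_zero (Units.ne_zero q))) e (ψ.symm s)
  exact ⟨ψ r, by simpa using congrArg ψ hr⟩

end QuantumAffineSpace

/-- Every unipotent automorphism of the quantum affine space
`O_q(K³)` (`q` not a root of unity), graded with `deg x_i = 1`, is of the form
`x₁ ↦ x₁`, `x₂ ↦ x₂ + ξ x₁x₃`, `x₃ ↦ x₃`. -/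
theorem unipotent_automorphisms_quantum_affine_3space {K R : Type*} [Field K] [Ring R]
    [Algebra K R] (q : Kˣ) (hq : ∀ k : ℕ, 0 < k → q ^ k ≠ 1)
    (x₁ x₂ x₃ : R)
    (h12 : x₁ * x₂ = (q : K) • (x₂ * x₁))
    (h13 : x₁ * x₃ = (q : K) • (x₃ * x₁))
    (h23 : x₂ * x₃ = (q : K) • (x₃ * x₂))
    (hPBW : LinearIndependent K
        (fun m : ℕ × ℕ × ℕ => x₁ ^ m.1 * x₂ ^ m.2.1 * x₃ ^ m.2.2) ∧
      Submodule.span K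
          (Set.range fun m : ℕ × ℕ × ℕ => x₁ ^ m.1 * x₂ ^ m.2.1 * x₃ ^ m.2.2) = ⊤)
    (ψ : R ≃ₐ[K] R)
    (hunip : ∀ (m : ℕ) (r : R),
      r ∈ Submodule.span K
        {w : R | ∃ a b c : ℕ, a + b + c = m ∧ w = x₁ ^ a * x₂ ^ b * x₃ ^ c} →
      ψ r - r ∈ Submodule.span K
        {w : R | ∃ a b c : ℕ, m + 1 ≤ a + b + c ∧ w = x₁ ^ a * x₂ ^ b * x₃ ^ c}) :
    ψ x₁ = x₁ ∧ ψ x₃ = x₃ ∧ ∃ ξ : K, ψ x₂ = x₂ + ξ • (x₁ * x₃) := by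
  obtain ⟨hli, hspan⟩ := hPBW
  set b := Basis.mk hli hspan.ge
  have hb_apply (m : ℕ × ℕ × ℕ) : b m = x₁ ^ m.1 * x₂ ^ m.2.1 * x₃ ^ m.2.2 := Basis.mk_apply ..
  have hdiag {e : ℕ × ℕ × ℕ} (he : e.1 + e.2.1 + e.2.2 = 1) :=
    QuantumAffineSpace.repr_map_basis_self_eq_one hb_apply ψ (hunip 1) he
  have hsupport {e m : ℕ × ℕ × ℕ} (he : e.1 + e.2.1 + e.2.2 = 1)
      (hm : m ∈ (b.repr (ψ (b e))).support) :=
    QuantumAffineSpace.partialDegrees_eq_of_mem_support_map hq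
      (QuantumAffineSpace.basis_mul_basis h12 h13 h23 hb_apply) ψ (hdiag he) hm
  refine ⟨?_, ?_, b.repr (ψ x₂) (1, 0, 1), ?_⟩
  · rw [show x₁ = b (1, 0, 0) by simp [hb_apply],
      ← b.sum_repr_of_support_subset (x := ψ (b (1, 0, 0))) (s := {(1, 0, 0)}) fun m hm => ?_]
    · simp [hdiag]
    · have := hsupport rfl hm
      simp only [Finset.mem_singleton, Prod.ext_iff] at this ⊢
      omega
  · rw [show x₃ = b (0, 0, 1) by simp [hb_apply],
      ← b.sum_repr_of_support_subset (x := ψ (b (0, 0, 1))) (s := {(0, 0, 1)}) fun m hm => ?_]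
    · simp [hdiag]
    · have := hsupport rfl hm
      simp only [Finset.mem_singleton, Prod.ext_iff] at this ⊢
      omega
  · rw [show x₂ = b (0, 1, 0) by simp [hb_apply], show x₁ * x₃ = b (1, 0, 1) by simp [hb_apply],
      ← b.sum_repr_of_support_subset (x := ψ (b (0, 1, 0))) (s := {(0, 1, 0), (1, 0, 1)})
        fun m hm => ?_]
    · simp [hdiag]
    · have := hsupport rfl hm
      simp only [Finset.mem_insert, Finset.mem_singleton, Prod.ext_iff] at this ⊢
      omega
end

section
/- Let R = K[x_1][x_2; σ_2, δ_2]⋯[x_N; σ_N, δ_N] be a diagonalized iterated Ore extension (σ_k(x_j) = λ_{kj}x_j for j < k) satisfying δ_k(x_j) ∈ R_{[j+1,k-1]} for all j < k. Fix l ∈ [1, N−1], and suppose that for each k ∈ [l+1, N], x_k x_l − λ_{kl} x_l x_k ∈ R_{[l+1,N]}. Then R_{[l+1,N]} + x_l R_{[l+1,N]} = R_{[l+1,N]} + R_{[l+1,N]} x_l, and ∑_{a≥0} x_l^a R_{[l+1,N]} is a subalgebra of R. -/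
/-!
Write `S = R_{[l+1,N]}`. Modulo `S`, the element `x l` `λ`-commutes with every generator `x k`
(`k > l`) of `S`, so an induction over products of generators gives
`x l * S ⊆ S + S * x l` and `S * x l ⊆ S + x l * S`. The second inclusion, iterated, gives
`S * x l ^ b ⊆ ∑ₐ x l ^ a * S`; hence every product `(x l ^ a * s) * (x l ^ b * t)` can be
brought back into `∑ₐ x l ^ a * S`, which is therefore a subalgebra.
-/

open Submodule

section PowMul

variable {K R : Type*} [CommSemiring K] [Semiring R] [Algebra K R] {M Y : Submodule K R}

theorem pow_mul_iSup_pow_mul_le (n : ℕ) :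
    Y ^ n * ⨆ a : ℕ, Y ^ a * M ≤ ⨆ a : ℕ, Y ^ a * M := by
  rw [mul_iSup]
  exact iSup_le fun a => by
    rw [← mul_assoc, ← pow_add]
    exact le_iSup (fun a => Y ^ a * M) (n + a)

theorem iSup_pow_mul_mul_le (hM : M * M ≤ M) :
    (⨆ a : ℕ, Y ^ a * M) * M ≤ ⨆ a : ℕ, Y ^ a * M := by
  rw [iSup_mul]
  exact iSup_mono fun a => by
    rw [mul_assoc]
    exact mul_le_mul' le_rfl hM

theorem mul_pow_le_iSup_pow_mul (hMY : M * Y ≤ M ⊔ Y * M) (n : ℕ) :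
    M * Y ^ n ≤ ⨆ a : ℕ, Y ^ a * M := by
  induction n with
  | zero => exact le_iSup_of_le 0 (by rw [pow_zero, mul_one, one_mul])
  | succ n ih =>
    calc M * Y ^ (n + 1) = M * Y * Y ^ n := by rw [pow_succ', mul_assoc]
      _ ≤ (M ⊔ Y * M) * Y ^ n := mul_le_mul' hMY le_rfl
      _ = M * Y ^ n ⊔ Y ^ 1 * (M * Y ^ n) := by rw [Submodule.sup_mul, pow_one, mul_assoc]
      _ ≤ ⨆ a : ℕ, Y ^ a * M :=
        sup_le ih ((mul_le_mul' le_rfl ih).trans (pow_mul_iSup_pow_mul_le 1))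

theorem iSup_pow_mul_mul_self_le (hM : M * M ≤ M) (hMY : M * Y ≤ M ⊔ Y * M) :
    (⨆ a : ℕ, Y ^ a * M) * (⨆ a : ℕ, Y ^ a * M) ≤ ⨆ a : ℕ, Y ^ a * M := by
  have hMP : M * (⨆ a : ℕ, Y ^ a * M) ≤ ⨆ a : ℕ, Y ^ a * M := by
    rw [mul_iSup]
    exact iSup_le fun b => by
      rw [← mul_assoc]
      exact (mul_le_mul' (mul_pow_le_iSup_pow_mul hMY b) le_rfl).trans (iSup_pow_mul_mul_le hM)
  calc (⨆ a : ℕ, Y ^ a * M) * (⨆ a : ℕ, Y ^ a * M)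
        = ⨆ a : ℕ, Y ^ a * (M * ⨆ a : ℕ, Y ^ a * M) := by simp only [iSup_mul, mul_assoc]
    _ ≤ ⨆ a : ℕ, Y ^ a * ⨆ a : ℕ, Y ^ a * M := iSup_mono fun a => mul_le_mul' le_rfl hMP
    _ ≤ ⨆ a : ℕ, Y ^ a * M := iSup_le pow_mul_iSup_pow_mul_le

theorem Subalgebra.exists_toSubmodule_eq_iSup_pow_mul (S : Subalgebra K R)
    (hSY : S.toSubmodule * Y ≤ S.toSubmodule ⊔ Y * S.toSubmodule) :
    ∃ T : Subalgebra K R, T.toSubmodule = ⨆ a : ℕ, Y ^ a * S.toSubmodule := by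
  have hS : S.toSubmodule * S.toSubmodule ≤ S.toSubmodule := S.isIdempotentElem_toSubmodule.le
  refine ⟨(⨆ a : ℕ, Y ^ a * S.toSubmodule).toSubalgebra ?_
    (fun _ _ ha hb => iSup_pow_mul_mul_self_le hS hSY (mul_mem_mul ha hb)), rfl⟩
  exact mem_iSup_of_mem 0 (by rw [pow_zero, one_mul]; exact S.one_mem)

end PowMul

section Adjoin

variable {K R : Type*} [CommSemiring K] [Semiring R] [Algebra K R]

theorem span_singleton_mul_eq_map_mulLeft (y : R) (M : Submodule K R) :
    span K {y} * M = M.map (LinearMap.mulLeft K y) := by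
  ext z; simp [mem_span_singleton_mul]

theorem mul_span_singleton_eq_map_mulRight (y : R) (M : Submodule K R) :
    M * span K {y} = M.map (LinearMap.mulRight K y) := by
  ext z; simp [mem_mul_span_singleton]

theorem span_singleton_pow (y : R) (n : ℕ) : span K {y} ^ n = span K {y ^ n} := by
  rw [span_pow, Set.singleton_pow]

theorem Subalgebra.mul_sup_mul_eq (S : Subalgebra K R) (Y : Submodule K R) :
    S.toSubmodule * (S.toSubmodule ⊔ S.toSubmodule * Y) = S.toSubmodule ⊔ S.toSubmodule * Y := by
  rw [Submodule.mul_sup, ← mul_assoc, S.isIdempotentElem_toSubmodule.eq]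

theorem Subalgebra.sup_mul_mul_eq (S : Subalgebra K R) (Y : Submodule K R) :
    (S.toSubmodule ⊔ Y * S.toSubmodule) * S.toSubmodule = S.toSubmodule ⊔ Y * S.toSubmodule := by
  rw [Submodule.sup_mul, mul_assoc, S.isIdempotentElem_toSubmodule.eq]

theorem span_singleton_mul_adjoin_le {s : Set R} {y : R}
    (h : ∀ g ∈ s, y * g ∈
      (Algebra.adjoin K s).toSubmodule ⊔ (Algebra.adjoin K s).toSubmodule * span K {y}) :
    span K {y} * (Algebra.adjoin K s).toSubmodule ≤
      (Algebra.adjoin K s).toSubmodule ⊔ (Algebra.adjoin K s).toSubmodule * span K {y} := by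
  rintro _ hz
  obtain ⟨t, ht, rfl⟩ := mem_span_singleton_mul.mp hz
  clear hz
  induction ht using Algebra.adjoin_induction with
  | mem g hg => exact h g hg
  | algebraMap r =>
    rw [← Algebra.commutes]
    exact mem_sup_right (mul_mem_mul (Subalgebra.algebraMap_mem _ r) (mem_span_singleton_self y))
  | add a b _ _ iha ihb => rw [mul_add]; exact add_mem iha ihb
  | mul a b _ hb iha ihb =>
    obtain ⟨u, hu, w, hw, hya⟩ := mem_sup.mp iha
    obtain ⟨v, hv, rfl⟩ := mem_mul_span_singleton.mp hw
    have hexpand : y * (a * b) = u * b + v * (y * b) := by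
      rw [← mul_assoc, ← hya, add_mul, mul_assoc]
    rw [hexpand]
    refine add_mem (mem_sup_left (Subalgebra.mul_mem _ hu hb)) ?_
    exact (Algebra.adjoin K s).mul_sup_mul_eq _ ▸ mul_mem_mul hv ihb

theorem adjoin_mul_span_singleton_le {s : Set R} {y : R}
    (h : ∀ g ∈ s, g * y ∈
      (Algebra.adjoin K s).toSubmodule ⊔ span K {y} * (Algebra.adjoin K s).toSubmodule) :
    (Algebra.adjoin K s).toSubmodule * span K {y} ≤
      (Algebra.adjoin K s).toSubmodule ⊔ span K {y} * (Algebra.adjoin K s).toSubmodule := by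
  rintro _ hz
  obtain ⟨t, ht, rfl⟩ := mem_mul_span_singleton.mp hz
  clear hz
  induction ht using Algebra.adjoin_induction with
  | mem g hg => exact h g hg
  | algebraMap r =>
    rw [Algebra.commutes]
    exact mem_sup_right (mul_mem_mul (mem_span_singleton_self y) (Subalgebra.algebraMap_mem _ r))
  | add a b _ _ iha ihb => rw [add_mul]; exact add_mem iha ihb
  | mul a b ha _ iha ihb =>
    obtain ⟨u, hu, w, hw, hby⟩ := mem_sup.mp ihb
    obtain ⟨v, hv, rfl⟩ := mem_span_singleton_mul.mp hw
    have hexpand : a * b * y = a * u + a * y * v := by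
      rw [mul_assoc, ← hby, mul_add, ← mul_assoc]
    rw [hexpand]
    refine add_mem (mem_sup_left (Subalgebra.mul_mem _ ha hu)) ?_
    exact (Algebra.adjoin K s).sup_mul_mul_eq _ ▸ mul_mem_mul iha hv

end Adjoin

section QCommutator

variable {K R : Type*} [CommRing K] [Ring R] [Algebra K R]

theorem Subalgebra.mul_mem_sup_mul_span_singleton_of_sub_smul_mem (S : Subalgebra K R)
    {y z : R} {c : Kˣ} (hz : z ∈ S) (h : z * y - (c : K) • (y * z) ∈ S) :
    y * z ∈ S.toSubmodule ⊔ S.toSubmodule * span K {y} := by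
  have hyz : y * z = ((c⁻¹ : Kˣ) : K) • z * y - ((c⁻¹ : Kˣ) : K) • (z * y - (c : K) • (y * z)) := by
    rw [smul_mul_assoc, smul_sub, smul_smul, Units.inv_mul, one_smul, sub_sub_cancel]
  rw [hyz]
  exact sub_mem (mem_sup_right (mul_mem_mul (S.smul_mem hz _) (mem_span_singleton_self y)))
    (mem_sup_left (S.smul_mem h _))

theorem Subalgebra.mul_mem_sup_span_singleton_mul_of_sub_smul_mem (S : Subalgebra K R)
    {y z : R} {c : Kˣ} (hz : z ∈ S) (h : z * y - (c : K) • (y * z) ∈ S) :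
    z * y ∈ S.toSubmodule ⊔ span K {y} * S.toSubmodule := by
  have hzy : z * y = (z * y - (c : K) • (y * z)) + y * ((c : K) • z) := by
    rw [mul_smul_comm, sub_add_cancel]
  rw [hzy]
  exact add_mem (mem_sup_left h)
    (mem_sup_right (mul_mem_mul (mem_span_singleton_self y) (S.smul_mem hz _)))

end QCommutator

theorem genSub_eq_adjoin_image_Ioi (K : Type*) {R : Type*} [Field K] [Ring R] [Algebra K R]
    {N : ℕ} (x : Fin N → R) (l : Fin N) :
    genSub K x ((l : ℤ) + 1) ((N : ℤ) - 1) = Algebra.adjoin K (x '' Set.Ioi l) := by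
  unfold genSub
  congr 1
  ext r
  constructor
  · rintro ⟨i, hli, -, rfl⟩
    exact ⟨i, Fin.lt_def.mpr (by omega), rfl⟩
  · rintro ⟨i, hli, rfl⟩
    have := Fin.lt_def.mp hli
    exact ⟨i, by omega, by omega, rfl⟩

theorem left_right_coset_eq_and_subalgebra_general {K R : Type*} [Field K] [Ring R]
    [Algebra K R] {N : ℕ} (x : Fin N → R) (lam : Fin N → Fin N → Kˣ)
    (l : Fin N)
    (hl : ∀ k : Fin N, l < k →
      x k * x l - (lam k l : K) • (x l * x k) ∈
        genSub K x ((l : ℤ) + 1) ((N : ℤ) - 1)) :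
    ((genSub K x ((l : ℤ) + 1) ((N : ℤ) - 1)).toSubmodule ⊔
        Submodule.map (LinearMap.mulLeft K (x l))
          (genSub K x ((l : ℤ) + 1) ((N : ℤ) - 1)).toSubmodule =
      (genSub K x ((l : ℤ) + 1) ((N : ℤ) - 1)).toSubmodule ⊔
        Submodule.map (LinearMap.mulRight K (x l))
          (genSub K x ((l : ℤ) + 1) ((N : ℤ) - 1)).toSubmodule) ∧
    (∃ T : Subalgebra K R, T.toSubmodule =
      ⨆ a : ℕ, Submodule.map (LinearMap.mulLeft K (x l ^ a))
        (genSub K x ((l : ℤ) + 1) ((N : ℤ) - 1)).toSubmodule) := by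
  simp only [genSub_eq_adjoin_image_Ioi, ← span_singleton_mul_eq_map_mulLeft,
    ← mul_span_singleton_eq_map_mulRight, ← span_singleton_pow] at hl ⊢
  set S := Algebra.adjoin K (x '' Set.Ioi l)
  have hxS : ∀ k, l < k → x k ∈ S := fun k hk => Algebra.subset_adjoin ⟨k, hk, rfl⟩
  have hleft : span K {x l} * S.toSubmodule ≤ S.toSubmodule ⊔ S.toSubmodule * span K {x l} :=
    span_singleton_mul_adjoin_le fun _ ⟨k, hk, hxk⟩ =>
      hxk ▸ S.mul_mem_sup_mul_span_singleton_of_sub_smul_mem (hxS k hk) (hl k hk)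
  have hright : S.toSubmodule * span K {x l} ≤ S.toSubmodule ⊔ span K {x l} * S.toSubmodule :=
    adjoin_mul_span_singleton_le fun _ ⟨k, hk, hxk⟩ =>
      hxk ▸ S.mul_mem_sup_span_singleton_mul_of_sub_smul_mem (hxS k hk) (hl k hk)
  exact ⟨le_antisymm (sup_le le_sup_left hleft) (sup_le le_sup_left hright),
    S.exists_toSubmodule_eq_iSup_pow_mul hright⟩

/-- Key step for reversibility: if
`x k * x l − λ_{kl} x l x k ∈ R_{[l+1,N-1]}` for all `k > l`, then
`R_{[l+1,N-1]} + x l · R_{[l+1,N-1]} = R_{[l+1,N-1]} + R_{[l+1,N-1]} · x l`, and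
`∑_{a ≥ 0} (x l)^a · R_{[l+1,N-1]}` is a subalgebra of `R`. -/
theorem left_right_coset_eq_and_subalgebra {K R : Type*} [Field K] [Ring R]
    [Algebra K R] {N : ℕ} (x : Fin N → R) (lam : Fin N → Fin N → Kˣ)
    (hdiag : IsDiagonalizedIOE K x lam) (hskew : MulSkewSymm lam)
    (hδ : ∀ j k : Fin N, j < k →
      x k * x j - (lam k j : K) • (x j * x k) ∈
        genSub K x ((j : ℤ) + 1) ((k : ℤ) - 1))
    (l : Fin N)
    (hl : ∀ k : Fin N, l < k →
      x k * x l - (lam k l : K) • (x l * x k) ∈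
        genSub K x ((l : ℤ) + 1) ((N : ℤ) - 1)) :
    ((genSub K x ((l : ℤ) + 1) ((N : ℤ) - 1)).toSubmodule ⊔
        Submodule.map (LinearMap.mulLeft K (x l))
          (genSub K x ((l : ℤ) + 1) ((N : ℤ) - 1)).toSubmodule =
      (genSub K x ((l : ℤ) + 1) ((N : ℤ) - 1)).toSubmodule ⊔
        Submodule.map (LinearMap.mulRight K (x l))
          (genSub K x ((l : ℤ) + 1) ((N : ℤ) - 1)).toSubmodule) ∧
    (∃ T : Subalgebra K R, T.toSubmodule =
      ⨆ a : ℕ, Submodule.map (LinearMap.mulLeft K (x l ^ a))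
        (genSub K x ((l : ℤ) + 1) ((N : ℤ) - 1)).toSubmodule) :=
  left_right_coset_eq_and_subalgebra_general x lam l hl
end
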